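/- Let ≈ be an SCER and T a string. Define LongestLSeedCov_T(i,j) = max({l : T[1:l] is a left ≈-seed of T[1:i] and a ≈-cover of T[1:j]} ∪ {0}). Then for all 1 ≤ j ≤ Border_T[i], LongestLSeedCov_T(i,j) = LongestLSeedCov_T(i−1,j). -/

import Mathlib

variable {α : Type*}

/-- `substr X i j` is the 1-indexed inclusive substring `X[i:j]`. -/
def substr (X : List α) (i j : ℕ) : List α := (X.take j).drop (i - 1)

/-- A substring consistent equivalence relation (SCER). -/
structure SCER (r : List α → List α → Prop) : Prop where
  equiv : Equivalence r
  length_eq : ∀ X Y, r X Y → X.length = Y.length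
  substr_congr : ∀ X Y, r X Y → ∀ i j, 1 ≤ i → i ≤ j → j ≤ X.length →
    r (substr X i j) (substr Y i j)

/-- `B` is a `≈`-border of `T`: `B` is equivalent to a prefix and a suffix of `T`. -/
def IsBorder (r : List α → List α → Prop) (B T : List α) : Prop :=
  B.length ≤ T.length ∧ r B (T.take B.length) ∧ r B (T.drop (T.length - B.length))

/-- `C` is a `≈`-cover of `T`: there are occurrences `x 1 = 1 < ... < x m = |T|-|C|+1`
with consecutive gaps at most `|C|`. -/
def IsCover (r : List α → List α → Prop) (C T : List α) : Prop :=
  ∃ (m : ℕ) (x : ℕ → ℕ), 1 ≤ m ∧ x 1 = 1 ∧ x m = T.length - C.length + 1 ∧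
    (∀ k, 1 ≤ k → k ≤ m → r C (substr T (x k) (x k + C.length - 1))) ∧
    (∀ k, 1 < k → k ≤ m → x (k - 1) < x k ∧ x k ≤ x (k - 1) + C.length)

def IsProperCover (r : List α → List α → Prop) (C T : List α) : Prop :=
  IsCover r C T ∧ C.length < T.length

/-- A string is primitive if it has no proper `≈`-cover. -/
def Primitive (r : List α → List α → Prop) (T : List α) : Prop :=
  ¬ ∃ C : List α, IsProperCover r C T

/-- `S` is a left `≈`-seed of `T`. -/
def IsLeftSeed (r : List α → List α → Prop) (S T : List α) : Prop :=
  ∃ k l, k ≤ l ∧ l < S.length ∧ IsCover r S (T.take (T.length - k)) ∧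
    r (S.take l) (T.drop (T.length - l))

/-- `Bd` is the `≈`-border array of `T`:
`Bd i` is the maximum length of a proper `≈`-border of `T[1:i]`. -/
def BorderArr (r : List α → List α → Prop) (T : List α) (Bd : ℕ → ℕ) : Prop :=
  ∀ i, 1 ≤ i → i ≤ T.length →
    IsGreatest {b | ∃ B : List α, B.length = b ∧ b < i ∧ IsBorder r B (T.take i)} (Bd i)

/-- `L` is the longest `≈`-cover array of `T`:
`L i = max({|C| : C proper ≈-cover of T[1:i]} ∪ {0})`. -/
def LCoverArr (r : List α → List α → Prop) (T : List α) (L : ℕ → ℕ) : Prop :=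
  ∀ i, 1 ≤ i → i ≤ T.length →
    IsGreatest (insert 0 {c | ∃ C : List α, C.length = c ∧ IsProperCover r C (T.take i)})
      (L i)

/-!
A left seed `T[1:l]` of `T[1:i]` is a chain of occurrences of `T[1:l]` covering `T[1:i-k]`
together with an occurrence of `T[1:d]` (`k ≤ d < l`) as a suffix of `T[1:i]`. Removing the
last letter shortens that suffix occurrence, or, when `k = 0`, removes the last occurrence of
the chain; so a left seed of `T[1:i]` shorter than `i` is one of `T[1:i-1]`.

Conversely let `T[1:l]` be a left seed of `T[1:i-1]` with `l ≤ B = Border_T[i]`, and let `M ≤ i`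
be maximal such that `T[1:l]` covers `T[1:M]`. The border translates an occurrence ending at
`e ≤ B` to one ending at `e + (i - B)`, so by maximality no occurrence of the chain ends in
`(B - (i - M), B]`. The occurrence of the chain ending in `(B, B + l - (i - M)]` therefore
overhangs `B` by a prefix of `T[1:l]` of length at least `i - M`, and the border translates this
prefix to a suffix of `T[1:i]`: `T[1:l]` is a left seed of `T[1:i]` with `k = i - M`.
Since `l ≤ j ≤ Border_T[i] < i` for every `l` in either maximum, both maxima are over the same set.
-/

section

variable {r : List α → List α → Prop} {T : List α}

theorem substr_one (X : List α) (c : ℕ) : substr X 1 c = X.take c := by simp [substr]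

theorem substr_take_of_le (X : List α) {N b : ℕ} (a : ℕ) (h : b ≤ N) :
    substr (X.take N) a b = substr X a b := by
  simp [substr, List.take_take, Nat.min_eq_left h]

theorem substr_substr (X : List α) (a b x y : ℕ) (hx : 1 ≤ x) :
    substr (substr X a b) x y = substr X (a - 1 + x) (min (a - 1 + y) b) := by
  simp only [substr, List.take_drop, List.take_take, List.drop_drop]
  congr 1
  omega

theorem length_substr (X : List α) (a b : ℕ) :
    (substr X a b).length = min b X.length - (a - 1) := by simp [substr]

theorem IsCover.length_le (h : SCER r) {C X : List α} (hc : IsCover r C X) :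
    C.length ≤ X.length := by
  obtain ⟨m, x, hm, hx1, -, hocc, -⟩ := hc
  have hlen := h.length_eq _ _ (hocc 1 le_rfl hm)
  rw [hx1, length_substr] at hlen
  omega

def PrefixOccAt (r : List α → List α → Prop) (T : List α) (l e : ℕ) : Prop :=
  r (T.take l) (substr T (e - l + 1) e)

theorem prefixOccAt_self (h : SCER r) (l : ℕ) : PrefixOccAt r T l l := by
  unfold PrefixOccAt
  rw [Nat.sub_self, substr_one]
  exact h.equiv.refl _

theorem prefixOccAt_zero (h : SCER r) (e : ℕ) : PrefixOccAt r T 0 e := by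
  simp only [PrefixOccAt, substr, List.take_zero, Nat.sub_zero, Nat.add_sub_cancel]
  rw [List.drop_eq_nil_of_le (by simp)]
  exact h.equiv.refl _

theorem PrefixOccAt.take (h : SCER r) {l e c : ℕ} (ho : PrefixOccAt r T l e) (hle : l ≤ e)
    (heT : e ≤ T.length) (hcl : c ≤ l) : PrefixOccAt r T c (e - l + c) := by
  rcases Nat.eq_zero_or_pos c with rfl | hc
  · exact prefixOccAt_zero h _
  have hcut := h.substr_congr _ _ ho 1 c le_rfl hc (by simp; omega)
  unfold PrefixOccAt
  rwa [substr_one, List.take_take, Nat.min_eq_left hcl, substr_substr _ _ _ _ _ le_rfl,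
    show e - l + 1 - 1 + 1 = e - l + c - c + 1 by omega,
    show min (e - l + 1 - 1 + c) e = e - l + c by omega] at hcut

theorem IsBorder.prefixOccAt (h : SCER r) {B : List α} {i : ℕ} (hb : IsBorder r B (T.take i))
    (hiT : i ≤ T.length) : PrefixOccAt r T B.length i := by
  obtain ⟨hle, hpre, hsuf⟩ := hb
  simp only [List.length_take, Nat.min_eq_left hiT, List.take_take] at hle hpre hsuf
  rw [Nat.min_eq_left hle] at hpre
  unfold PrefixOccAt substr
  rw [show i - B.length + 1 - 1 = i - B.length by omega]
  exact h.equiv.trans (h.equiv.symm hpre) hsuf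

theorem rel_substr_add_of_border (h : SCER r) {B i : ℕ} (hbord : PrefixOccAt r T B i)
    (hBi : B ≤ i) (hiT : i ≤ T.length) {x y : ℕ} (hx : 1 ≤ x) (hxy : x ≤ y) (hyB : y ≤ B) :
    r (substr T x y) (substr T (x + (i - B)) (y + (i - B))) := by
  have hc := h.substr_congr _ _ hbord x y hx hxy (by simp; omega)
  rwa [substr_take_of_le T x hyB, substr_substr T _ _ _ _ hx,
    show i - B + 1 - 1 + x = x + (i - B) by omega,
    show min (i - B + 1 - 1 + y) i = y + (i - B) by omega] at hc

theorem PrefixOccAt.add_of_border (h : SCER r) {B i l e : ℕ} (ho : PrefixOccAt r T l e)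
    (hbord : PrefixOccAt r T B i) (hBi : B ≤ i) (hiT : i ≤ T.length) (hle : l ≤ e)
    (heB : e ≤ B) : PrefixOccAt r T l (e + (i - B)) := by
  rcases Nat.eq_zero_or_pos l with rfl | hl
  · exact prefixOccAt_zero h _
  have hs := rel_substr_add_of_border h hbord hBi hiT (x := e - l + 1) (y := e)
    (by omega) (by omega) heB
  unfold PrefixOccAt at ho ⊢
  rw [show e + (i - B) - l + 1 = e - l + 1 + (i - B) by omega]
  exact h.equiv.trans ho hs

inductive PrefixCovers (r : List α → List α → Prop) (T : List α) (l : ℕ) : ℕ → Prop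
  | base : PrefixCovers r T l l
  | step {N' N : ℕ} : PrefixCovers r T l N' → N' < N → N ≤ N' + l → PrefixOccAt r T l N →
      PrefixCovers r T l N

namespace PrefixCovers

theorem le {l N : ℕ} (hc : PrefixCovers r T l N) : l ≤ N := by
  induction hc with
  | base => exact le_rfl
  | step _ hlt _ _ ih => omega

theorem occ (h : SCER r) {l N : ℕ} (hc : PrefixCovers r T l N) : PrefixOccAt r T l N := by
  cases hc with
  | base => exact prefixOccAt_self h l
  | step _ _ _ ho => exact ho

theorem exists_occ_mem_Ioc (h : SCER r) {l N a : ℕ} (hc : PrefixCovers r T l N) (haN : a < N) :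
    ∃ e ∈ Set.Ioc a (a + l), l ≤ e ∧ e ≤ N ∧ PrefixOccAt r T l e := by
  induction hc with
  | base => exact ⟨l, ⟨haN, by omega⟩, le_rfl, le_rfl, prefixOccAt_self h l⟩
  | @step N' N hc' hlt hle ho ih =>
    by_cases haN' : a < N'
    · obtain ⟨e, he, hle, heN', ho⟩ := ih haN'
      exact ⟨e, he, hle, heN'.trans hlt.le, ho⟩
    · exact ⟨N, ⟨haN, by omega⟩, hc'.le.trans hlt.le, le_rfl, ho⟩

end PrefixCovers

theorem rel_substr_take_iff (h : SCER r) {l N a : ℕ} (hl : 1 ≤ l) (hlT : l ≤ T.length) :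
    r (T.take l) (substr (T.take N) a (a + l - 1)) ↔
      1 ≤ a ∧ a + l - 1 ≤ N ∧ PrefixOccAt r T l (a + l - 1) := by
  unfold PrefixOccAt
  constructor
  · intro ho
    have hlen := h.length_eq _ _ ho
    simp only [List.length_take, length_substr] at hlen
    have hN : a + l - 1 ≤ N := by omega
    refine ⟨by omega, hN, ?_⟩
    rwa [show a + l - 1 - l + 1 = a by omega, ← substr_take_of_le T a hN]
  · rintro ⟨ha, hN, ho⟩
    rwa [show a + l - 1 - l + 1 = a by omega, ← substr_take_of_le T a hN] at ho

theorem IsCover.prefixCovers (h : SCER r) {l N : ℕ} (hl : 1 ≤ l) (hlT : l ≤ T.length)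
    (hNT : N ≤ T.length) (hc : IsCover r (T.take l) (T.take N)) : PrefixCovers r T l N := by
  obtain ⟨m, x, hm, hx1, hxm, hocc, hgap⟩ := hc
  simp only [List.length_take, Nat.min_eq_left hlT, Nat.min_eq_left hNT] at hxm hocc hgap
  have hocc' := fun t h1 h2 => (rel_substr_take_iff h hl hlT).mp (hocc t h1 h2)
  have hchain : ∀ t, 1 ≤ t → t ≤ m → PrefixCovers r T l (x t + l - 1) := by
    intro t ht htm
    induction t, ht using Nat.le_induction with
    | base => rw [hx1, show 1 + l - 1 = l by omega]; exact .base
    | succ t ht ih =>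
      have hg := hgap (t + 1) (by omega) htm
      rw [Nat.add_sub_cancel] at hg
      exact (ih (by omega)).step (by omega) (by omega) (hocc' (t + 1) (by omega) htm).2.2
  have hend := (hocc' m hm le_rfl).2.1
  rw [hxm] at hend
  simpa [hxm, show N - l + 1 + l - 1 = N by omega] using hchain m hm le_rfl

theorem IsCover.extend (h : SCER r) {l N' N : ℕ} (hl : 1 ≤ l)
    (hc : IsCover r (T.take l) (T.take N')) (hlt : N' < N) (hle : N ≤ N' + l)
    (hNT : N ≤ T.length) (ho : PrefixOccAt r T l N) :
    IsCover r (T.take l) (T.take N) := by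
  have hlN' : l ≤ N' := by
    have := hc.length_le h
    simp only [List.length_take] at this
    omega
  obtain ⟨m, x, hm, hx1, hxm, hocc, hgap⟩ := hc
  simp only [List.length_take, Nat.min_eq_left (show l ≤ T.length by omega),
    Nat.min_eq_left (show N' ≤ T.length by omega)] at hxm hocc hgap
  refine ⟨m + 1, fun t => if t ≤ m then x t else N - l + 1, by omega, by simp [hm, hx1],
    by simp; omega, fun t h1 h2 => ?_, fun t h1 h2 => ?_⟩
  · rw [List.length_take, Nat.min_eq_left (show l ≤ T.length by omega)]
    dsimp only
    rw [rel_substr_take_iff h hl (by omega)]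
    split_ifs with htm
    · obtain ⟨hx, hxN, hxo⟩ := (rel_substr_take_iff h hl (by omega)).mp (hocc t h1 htm)
      exact ⟨hx, by omega, hxo⟩
    · rw [show N - l + 1 + l - 1 = N by omega]
      exact ⟨by omega, le_rfl, ho⟩
  · simp only [List.length_take, Nat.min_eq_left (show l ≤ T.length by omega)]
    by_cases htm : t ≤ m
    · simp only [htm, if_true, show t - 1 ≤ m by omega]
      exact hgap t h1 htm
    · simp only [htm, if_false, show t - 1 = m by omega, le_refl, if_true, hxm]
      omega

theorem PrefixCovers.isCover (h : SCER r) {l N : ℕ} (hl : 1 ≤ l) (hNT : N ≤ T.length)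
    (hc : PrefixCovers r T l N) : IsCover r (T.take l) (T.take N) := by
  induction hc with
  | base =>
    refine ⟨1, fun _ => 1, le_rfl, rfl, by simp, fun _ _ _ => ?_, fun _ _ _ => by omega⟩
    rw [List.length_take, Nat.min_eq_left hNT, rel_substr_take_iff h hl hNT,
      show 1 + l - 1 = l by omega]
    exact ⟨le_rfl, le_rfl, prefixOccAt_self h l⟩
  | step _ hlt hle ho ih => exact (ih (by omega)).extend h hl hlt hle hNT ho

theorem isCover_take_iff (h : SCER r) {l N : ℕ} (hl : 1 ≤ l) (hlT : l ≤ T.length)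
    (hNT : N ≤ T.length) : IsCover r (T.take l) (T.take N) ↔ PrefixCovers r T l N :=
  ⟨IsCover.prefixCovers h hl hlT hNT, PrefixCovers.isCover h hl hNT⟩

theorem isLeftSeed_take_iff (h : SCER r) {l i : ℕ} (hl : 1 ≤ l) (hlT : l ≤ T.length)
    (hiT : i ≤ T.length) :
    IsLeftSeed r (T.take l) (T.take i) ↔
      ∃ k d, k ≤ d ∧ d < l ∧ PrefixCovers r T l (i - k) ∧ PrefixOccAt r T d i := by
  simp only [IsLeftSeed, List.length_take, Nat.min_eq_left hlT, Nat.min_eq_left hiT,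
    List.take_take, Nat.min_eq_left (Nat.sub_le i _)]
  refine exists_congr fun k => exists_congr fun d => ?_
  constructor
  · rintro ⟨hkd, hdl, hc, ho⟩
    refine ⟨hkd, hdl, (isCover_take_iff h hl hlT (by omega)).mp hc, ?_⟩
    rwa [Nat.min_eq_left hdl.le] at ho
  · rintro ⟨hkd, hdl, hc, ho⟩
    refine ⟨hkd, hdl, (isCover_take_iff h hl hlT (by omega)).mpr hc, ?_⟩
    rwa [Nat.min_eq_left hdl.le]

theorem IsLeftSeed.take_pred (h : SCER r) {l i : ℕ}
    (hs : IsLeftSeed r (T.take l) (T.take i)) (hli : l < i) (hiT : i ≤ T.length) :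
    IsLeftSeed r (T.take l) (T.take (i - 1)) := by
  have hl : 1 ≤ l := by
    obtain ⟨_, _, _, hd, _⟩ := hs
    simp only [List.length_take] at hd
    omega
  rw [isLeftSeed_take_iff h hl (by omega) hiT] at hs
  rw [isLeftSeed_take_iff h hl (by omega) (by omega)]
  obtain ⟨k, d, hkd, hdl, hc, ho⟩ := hs
  rcases Nat.eq_zero_or_pos k with rfl | hk
  · rw [Nat.sub_zero] at hc
    cases hc with
    | base => omega
    | @step N' _ hc' hlt hle ho' =>
      have hcut := ho'.take h (by omega) hiT (Nat.sub_le l 1)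
      rw [show i - l + (l - 1) = i - 1 by omega] at hcut
      exact ⟨i - 1 - N', l - 1, by omega, by omega,
        by rwa [show i - 1 - (i - 1 - N') = N' by omega], hcut⟩
  · have hcut := ho.take h (by omega) hiT (Nat.sub_le d 1)
    rw [show i - d + (d - 1) = i - 1 by omega] at hcut
    exact ⟨k - 1, d - 1, by omega, by omega, by rwa [show i - 1 - (k - 1) = i - k by omega], hcut⟩

theorem PrefixCovers.isLeftSeed_of_border (h : SCER r) {l P B i : ℕ} (hc : PrefixCovers r T l P)
    (hPi : P ≤ i) (hiP : i ≤ P + l) (hbord : PrefixOccAt r T B i) (hlB : l ≤ B) (hBi : B < i)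
    (hiT : i ≤ T.length) (hl : 1 ≤ l) : IsLeftSeed r (T.take l) (T.take i) := by
  classical
  rw [isLeftSeed_take_iff h hl (by omega) hiT]
  set M := Nat.findGreatest (PrefixCovers r T l) i
  have hPM : P ≤ M := Nat.le_findGreatest hPi hc
  have hM : PrefixCovers r T l M := Nat.findGreatest_spec hPi hc
  have hMi : M ≤ i := Nat.findGreatest_le i
  have hmax : ∀ N, M < N → N ≤ i → ¬ PrefixCovers r T l N :=
    fun _ => Nat.findGreatest_is_greatest
  clear_value M
  have hstuck : ∀ e, l ≤ e → e ≤ B → PrefixOccAt r T l e → e + (i - B) ≤ M := by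
    intro e hle heB ho
    by_contra! hlt
    exact hmax _ hlt (by omega)
      (hM.step hlt (by omega) (ho.add_of_border h hbord hBi.le hiT hle heB))
  rcases hMi.eq_or_lt with hMi | hMi
  · exact ⟨0, 0, le_rfl, hl, by rwa [Nat.sub_zero, ← hMi], prefixOccAt_zero h i⟩
  have hBM : B < M := by
    by_contra! hMB
    have := hstuck M hM.le hMB (hM.occ h)
    omega
  obtain ⟨e, ⟨hae, hea⟩, hle, heM, ho⟩ := hM.exists_occ_mem_Ioc h (a := B - (i - M)) (by omega)
  have hBe : B < e := by
    by_contra! heB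
    have := hstuck e hle heB ho
    omega
  -- the occurrence ending at `e` overhangs `B` by the prefix of length `B + l - e ≥ i - M`
  have hcut := ho.take h hle (by omega) (c := B + l - e) (by omega)
  rw [show e - l + (B + l - e) = B by omega] at hcut
  have hsuf := hcut.add_of_border h hbord hBi.le hiT (by omega) le_rfl
  rw [show B + (i - B) = i by omega] at hsuf
  exact ⟨i - M, B + l - e, by omega, by omega, by rwa [show i - (i - M) = M by omega], hsuf⟩

theorem IsLeftSeed.of_take_pred_of_border (h : SCER r) {l B i : ℕ}
    (hs : IsLeftSeed r (T.take l) (T.take (i - 1))) (hbord : PrefixOccAt r T B i) (hlB : l ≤ B)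
    (hBi : B < i) (hiT : i ≤ T.length) : IsLeftSeed r (T.take l) (T.take i) := by
  have hl : 1 ≤ l := by
    obtain ⟨_, _, _, hd, _⟩ := hs
    simp only [List.length_take] at hd
    omega
  obtain ⟨k, d, hkd, hdl, hc, -⟩ := (isLeftSeed_take_iff h hl (by omega) (by omega)).mp hs
  have hlP := hc.le
  exact hc.isLeftSeed_of_border h (by omega) (by omega) hbord hlB hBi hiT hl

end

theorem stmt18_general (r : List α → List α → Prop) (h : SCER r) (T : List α) (Bd : ℕ → ℕ)
    (hB : BorderArr r T Bd) (i j a b : ℕ)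
    (h1 : 1 ≤ i) (h2 : i ≤ T.length) (h4 : j ≤ Bd i)
    (ha : IsGreatest (insert 0 {l | IsLeftSeed r (T.take l) (T.take i) ∧
      IsCover r (T.take l) (T.take j)}) a)
    (hb : IsGreatest (insert 0 {l | IsLeftSeed r (T.take l) (T.take (i - 1)) ∧
      IsCover r (T.take l) (T.take j)}) b) :
    a = b := by
  obtain ⟨⟨B, hBlen, hBi, hB⟩, -⟩ := hB i h1 h2
  have hbord : PrefixOccAt r T (Bd i) i := hBlen ▸ hB.prefixOccAt h h2
  have hseed : ∀ l, IsCover r (T.take l) (T.take j) →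
      (IsLeftSeed r (T.take l) (T.take i) ↔ IsLeftSeed r (T.take l) (T.take (i - 1))) := by
    intro l hc
    have hlj := hc.length_le h
    simp only [List.length_take] at hlj
    exact ⟨fun hs => hs.take_pred h (by omega) h2,
      fun hs => hs.of_take_pred_of_border h hbord (by omega) hBi h2⟩
  have hsets : {l | IsLeftSeed r (T.take l) (T.take i) ∧ IsCover r (T.take l) (T.take j)} =
      {l | IsLeftSeed r (T.take l) (T.take (i - 1)) ∧ IsCover r (T.take l) (T.take j)} :=
    Set.ext fun l => ⟨fun ⟨hs, hc⟩ => ⟨(hseed l hc).mp hs, hc⟩,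
      fun ⟨hs, hc⟩ => ⟨(hseed l hc).mpr hs, hc⟩⟩
  rw [hsets] at ha
  exact ha.unique hb

theorem stmt18 (r : List α → List α → Prop) (h : SCER r) (T : List α) (Bd : ℕ → ℕ)
    (hB : BorderArr r T Bd) (i j a b : ℕ)
    (h1 : 1 ≤ i) (h2 : i ≤ T.length) (h3 : 1 ≤ j) (h4 : j ≤ Bd i)
    (ha : IsGreatest (insert 0 {l | IsLeftSeed r (T.take l) (T.take i) ∧
      IsCover r (T.take l) (T.take j)}) a)
    (hb : IsGreatest (insert 0 {l | IsLeftSeed r (T.take l) (T.take (i - 1)) ∧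
      IsCover r (T.take l) (T.take j)}) b) :
    a = b :=
  stmt18_general r h T Bd hB i j a b h1 h2 h4 ha hb
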